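/- arXiv:2510.18994 — 2 statements merged into one kernel-verified Lean document; each statement's English description precedes it below -/
import Mathlib

section
/- Let m ≥ 1 be an integer and let θ ∈ (0, π) satisfy sin(2θ) ≠ 0 and θ ∉ {π/(k+1) : 1 ≤ k ≤ m} ∪ {π − π/(k+1) : 1 ≤ k ≤ m}. If sin((ν+1)θ)·sin((ν+2)θ)/(sin θ · sin 2θ) ≥ 0 for every integer ν with 1 ≤ ν ≤ m, then min(θ, π − θ) ≤ π/(m+2). -/
/-!
If `π/(m+2) < θ < π/2`, the multiples of `θ` step over `π` inside the range `2θ, …, (m+2)θ`: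
there is `1 ≤ k ≤ m` with `(k+1)θ < π < (k+2)θ` (equality being excluded), and then the
numerator of the `k`-th eigenvalue is negative while its denominator is positive. The case
`θ > π/2` reduces to this one, as the eigenvalues are invariant under `θ ↦ π - θ`.
-/

open Real

noncomputable def symSqEigenvalue (ν : ℕ) (θ : ℝ) : ℝ :=
  sin ((ν + 1) * θ) * sin ((ν + 2) * θ) / (sin θ * sin (2 * θ))

lemma sin_mul_sin_succ_mul_pi_sub (n : ℕ) (θ : ℝ) :
    sin (n * (π - θ)) * sin ((n + 1) * (π - θ)) = -(sin (n * θ) * sin ((n + 1) * θ)) := by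
  have h₁ : (n : ℝ) * (π - θ) = n * π - n * θ := by ring
  have h₂ : ((n : ℝ) + 1) * (π - θ) = ((n + 1 : ℕ) : ℝ) * π - (n + 1) * θ := by push_cast; ring
  rw [h₁, h₂, sin_nat_mul_pi_sub, sin_nat_mul_pi_sub, pow_succ]
  ring_nf
  simp

lemma symSqEigenvalue_pi_sub (ν : ℕ) (θ : ℝ) :
    symSqEigenvalue ν (π - θ) = symSqEigenvalue ν θ := by
  have num := sin_mul_sin_succ_mul_pi_sub (ν + 1) θ
  have den := sin_mul_sin_succ_mul_pi_sub 1 θ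
  push_cast at num den
  simp only [one_mul, one_add_one_eq_two, add_assoc] at num den
  rw [symSqEigenvalue, symSqEigenvalue, num, den, neg_div_neg_eq]

lemma sin_mul_sin_add_neg {x θ : ℝ} (hx : 0 < x) (hxπ : x < π) (hπ : π < x + θ) (hθ : θ < π) :
    sin x * sin (x + θ) < 0 := by
  refine mul_neg_of_pos_of_neg (sin_pos_of_pos_of_lt_pi hx hxπ) ?_
  have := sin_pos_of_pos_of_lt_pi (x := x + θ - π) (by linarith) (by linarith)
  rwa [sin_sub_pi, neg_pos] at this

lemma symSqEigenvalue_neg {ν : ℕ} {θ : ℝ} (hθ : 0 < θ) (hθπ : 2 * θ < π)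
    (hlt : (ν + 1) * θ < π) (hgt : π < (ν + 2) * θ) : symSqEigenvalue ν θ < 0 := by
  have hden : 0 < sin θ * sin (2 * θ) :=
    mul_pos (sin_pos_of_pos_of_lt_pi hθ (by linarith)) (sin_pos_of_pos_of_lt_pi (by linarith) hθπ)
  have hnum := sin_mul_sin_add_neg (x := (ν + 1) * θ) (θ := θ) (by positivity) hlt
    (by linarith) (by linarith)
  rw [show ((ν : ℝ) + 1) * θ + θ = (ν + 2) * θ by ring] at hnum
  exact div_neg_of_neg_of_pos hnum hden

/-- For `n = ⌊π/θ⌋` one has `nθ ≤ π < (n+1)θ`, with `nθ ≠ π` by hypothesis; take `k = n - 1`. -/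
lemma exists_mul_lt_pi_lt_succ_mul {m : ℕ} {θ : ℝ} (hθ : 0 < θ) (hθπ : 2 * θ < π)
    (hwin : π / (m + 2) < θ) (hexc : ∀ k : ℕ, 1 ≤ k → k ≤ m → θ ≠ π / (k + 1)) :
    ∃ k : ℕ, 1 ≤ k ∧ k ≤ m ∧ (k + 1) * θ < π ∧ π < (k + 2) * θ := by
  have hfloor : (⌊π / θ⌋₊ : ℝ) * θ ≤ π := (le_div_iff₀ hθ).mp (Nat.floor_le (by positivity))
  have hceil : π < (⌊π / θ⌋₊ + 1) * θ := (div_lt_iff₀ hθ).mp (Nat.lt_floor_add_one _)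
  have hn2 : 2 ≤ ⌊π / θ⌋₊ := Nat.le_floor ((le_div_iff₀ hθ).mpr (by push_cast; linarith))
  have hnm : ⌊π / θ⌋₊ < m + 2 := (Nat.floor_lt (by positivity)).mpr ((div_lt_iff₀ hθ).mpr
    (by rw [mul_comm]; exact_mod_cast (div_lt_iff₀ (by positivity)).mp hwin))
  generalize ⌊π / θ⌋₊ = n at *
  obtain ⟨k, rfl⟩ : ∃ k, n = k + 1 := ⟨n - 1, by omega⟩
  push_cast at hfloor hceil
  have hne : ((k : ℝ) + 1) * θ ≠ π := fun h ↦
    hexc k (by omega) (by omega) (by rw [← h]; field_simp)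
  exact ⟨k, by omega, by omega, lt_of_le_of_ne hfloor hne, by linarith⟩

lemma le_pi_div_of_symSqEigenvalue_nonneg {m : ℕ} {θ : ℝ} (hθ : 0 < θ) (hθπ : 2 * θ < π)
    (hexc : ∀ k : ℕ, 1 ≤ k → k ≤ m → θ ≠ π / (k + 1))
    (hpos : ∀ ν : ℕ, 1 ≤ ν → ν ≤ m → 0 ≤ symSqEigenvalue ν θ) :
    θ ≤ π / (m + 2) := by
  by_contra! hwin
  obtain ⟨k, hk1, hkm, hlt, hgt⟩ := exists_mul_lt_pi_lt_succ_mul hθ hθπ hwin hexc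
  exact (symSqEigenvalue_neg hθ hθπ hlt hgt).not_ge (hpos k hk1 hkm)

theorem hecke_angle_in_first_window_general (m : ℕ) (θ : ℝ)
    (hθ : θ ∈ Set.Ioo 0 Real.pi) (h2θ : Real.sin ((2 : ℝ) * θ) ≠ 0)
    (hexc : ∀ k : ℕ, 1 ≤ k → k ≤ m →
      θ ≠ Real.pi / ((k : ℝ) + 1) ∧ θ ≠ Real.pi - Real.pi / ((k : ℝ) + 1))
    (hpos : ∀ ν : ℕ, 1 ≤ ν → ν ≤ m →
      0 ≤ Real.sin (((ν : ℝ) + 1) * θ) * Real.sin (((ν : ℝ) + 2) * θ) /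
          (Real.sin θ * Real.sin (2 * θ))) :
    min θ (Real.pi - θ) ≤ Real.pi / ((m : ℝ) + 2) := by
  obtain ⟨hθ0, hθπ⟩ := hθ
  have hhalf : 2 * θ ≠ π := fun h ↦ h2θ (by rw [h, sin_pi])
  rcases hhalf.lt_or_gt with hlt | hgt
  · exact (min_le_left _ _).trans <|
      le_pi_div_of_symSqEigenvalue_nonneg hθ0 hlt (fun k h1 h2 ↦ (hexc k h1 h2).1) hpos
  · refine (min_le_right _ _).trans <|
      le_pi_div_of_symSqEigenvalue_nonneg (by linarith) (by linarith) (fun k h1 h2 h ↦ ?_)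
        (fun ν h1 h2 ↦ symSqEigenvalue_pi_sub ν θ ▸ hpos ν h1 h2)
    exact (hexc k h1 h2).2 (by linarith)

theorem hecke_angle_in_first_window (m : ℕ) (hm : 1 ≤ m) (θ : ℝ)
    (hθ : θ ∈ Set.Ioo 0 Real.pi) (h2θ : Real.sin ((2 : ℝ) * θ) ≠ 0)
    (hexc : ∀ k : ℕ, 1 ≤ k → k ≤ m →
      θ ≠ Real.pi / ((k : ℝ) + 1) ∧ θ ≠ Real.pi - Real.pi / ((k : ℝ) + 1))
    (hpos : ∀ ν : ℕ, 1 ≤ ν → ν ≤ m →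
      0 ≤ Real.sin (((ν : ℝ) + 1) * θ) * Real.sin (((ν : ℝ) + 2) * θ) /
          (Real.sin θ * Real.sin (2 * θ))) :
    min θ (Real.pi - θ) ≤ Real.pi / ((m : ℝ) + 2) :=
  hecke_angle_in_first_window_general m θ hθ h2θ hexc hpos
end

section
/- Let m ≥ 2 be an integer, C_m ≥ 0 a real constant, and let 0 < P ≤ X/2 be real numbers. Let w : ℝ → ℝ be m times continuously differentiable with w(x) = 0 for x ∉ [P, X+P], w(x) = 1 for x ∈ [2P, X], 0 ≤ w(x) ≤ 1 for all x, and |w^{(m)}(x)| ≤ C_m·P^{−m} for all x. Then there exists a constant C', depending only on m and C_m, such that for every b ∈ (0, 2], every M ≥ 0, every measurable F : ℝ → ℂ with |F(t)| ≤ M for all t, and every T ≥ 1: ∫_{|t| ≥ T} |𝑤̃(b + it)|·|F(t)| dt ≤ C' · M · P · X^{b−1} · (X/P)^m · T^{1−m}. -/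
/-!
Integrating by parts `m` times, `w̃(s) = (-1)^m / (s (s+1) ⋯ (s+m-1)) · (w^(m))~(s + m)`, and
each factor satisfies `|s + k| ≥ |Im s|`. Since `w` is constant off `[P, 2P] ∪ [X, X+P]`, `w^(m)`
lives on a set of measure `2P` where it is at most `Cm P^(-m)`, so
`|w̃(b + it)| ≤ 2 Cm P^(1-m) (X+P)^(b+m-1) |t|^(-m)`. Integrating `|t|^(-m)` over `|t| ≥ T` gives
`2 T^(1-m) / (m-1)`.
-/

open MeasureTheory Set Filter Topology Function

theorem tsupport_iteratedDeriv_subset {𝕜 F : Type*} [NontriviallyNormedField 𝕜]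
    [NormedAddCommGroup F] [NormedSpace 𝕜 F] {f : 𝕜 → F} (n : ℕ) :
    tsupport (iteratedDeriv n f) ⊆ tsupport f := by
  induction n with
  | zero => rfl
  | succ n ih => rw [iteratedDeriv_succ]; exact tsupport_deriv_subset.trans ih

theorem support_iteratedDeriv_subset_of_eq_zero_of_eq_one {w : ℝ → ℝ} {a b c d : ℝ} {n : ℕ}
    (hn : n ≠ 0) (hzero : ∀ x ∉ Icc a d, w x = 0) (hone : ∀ x ∈ Icc b c, w x = 1) :
    support (iteratedDeriv n w) ⊆ Icc a b ∪ Icc c d := by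
  intro x hx
  have htsupp : tsupport w ⊆ Icc a d := closure_minimal (support_subset_iff'.2 hzero) isClosed_Icc
  have hxad := htsupp (tsupport_iteratedDeriv_subset n (subset_tsupport _ hx))
  by_contra hxS
  have hxbc : x ∈ Ioo b c :=
    ⟨lt_of_not_ge fun h => hxS (.inl ⟨hxad.1, h⟩), lt_of_not_ge fun h => hxS (.inr ⟨h, hxad.2⟩)⟩
  have hlocal : w =ᶠ[𝓝 x] fun _ => 1 :=
    eventually_of_mem (Ioo_mem_nhds hxbc.1 hxbc.2) fun y hy => hone y (Ioo_subset_Icc_self hy)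
  exact hx (by rw [hlocal.iteratedDeriv_eq, iteratedDeriv_const, if_neg hn])

section Mellin

variable {a c : ℝ}

theorem mellin_eq_intervalIntegral {g : ℝ → ℂ} (ha : 0 ≤ a) (hg : support g ⊆ Ioc a c) (s : ℂ) :
    mellin g s = ∫ x in a..c, (x : ℂ) ^ (s - 1) * g x := by
  have hsupp : support (fun x : ℝ => (x : ℂ) ^ (s - 1) * g x) ⊆ Ioc a c :=
    (support_mul_subset_right _ _).trans hg
  rw [mellin, intervalIntegral.integral_eq_integral_of_support_subset hsupp,
    setIntegral_eq_integral_of_forall_compl_eq_zero]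
  · rfl
  · exact fun x hx => notMem_support.1 fun h => hx ((hsupp h).1.trans_le' ha)

theorem mellin_ofReal_eq_neg_mellin_deriv_div {f : ℝ → ℝ} (ha : 0 < a) (hf : ContDiff ℝ 1 f)
    (hsupp : tsupport f ⊆ Ioo a c) {s : ℂ} (hs : s ≠ 0) :
    mellin (fun x => (f x : ℂ)) s = -(mellin (fun x => ((deriv f x : ℝ) : ℂ)) (s + 1) / s) := by
  rcases (tsupport f).eq_empty_or_nonempty with hempty | ⟨x₀, hx₀⟩
  · simp [tsupport_eq_empty_iff.1 hempty, mellin]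
  have hac : a ≤ c := (hsupp hx₀).1.le.trans (hsupp hx₀).2.le
  have hofReal : ∀ {g : ℝ → ℝ}, tsupport g ⊆ Ioo a c → support (fun x => (g x : ℂ)) ⊆ Ioc a c :=
    fun hg x hx => Ioo_subset_Ioc_self (hg (subset_tsupport _ (by simpa using hx)))
  have hpos : ∀ x ∈ uIcc a c, 0 < x := fun x hx => ha.trans_le (uIcc_of_le hac ▸ hx).1
  have hfa : f a = 0 := image_eq_zero_of_notMem_tsupport fun h => (hsupp h).1.false
  have hfc : f c = 0 := image_eq_zero_of_notMem_tsupport fun h => (hsupp h).2.false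
  have hu : ∀ x ∈ uIcc a c, HasDerivAt (fun y => (f y : ℂ)) ((deriv f x : ℝ) : ℂ) x := fun x _ =>
    ((hf.differentiable one_ne_zero) x).hasDerivAt.ofReal_comp
  have hv : ∀ x ∈ uIcc a c, HasDerivAt (fun y : ℝ => (y : ℂ) ^ s / s) ((x : ℂ) ^ (s - 1)) x := by
    intro x hx
    simpa using hasDerivAt_ofReal_cpow_const' (hpos x hx).ne' (r := s - 1)
      (by simpa [sub_eq_neg_self] using hs)
  have hu' : IntervalIntegrable (fun x => ((deriv f x : ℝ) : ℂ)) volume a c :=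
    (Complex.continuous_ofReal.comp (hf.continuous_deriv le_rfl)).intervalIntegrable _ _
  have hv' : IntervalIntegrable (fun x : ℝ => (x : ℂ) ^ (s - 1)) volume a c :=
    ContinuousOn.intervalIntegrable fun x hx => (Complex.continuousAt_ofReal_cpow_const x _
      (.inr (hpos x hx).ne')).continuousWithinAt
  have hibp := intervalIntegral.integral_mul_deriv_eq_deriv_mul hu hv hu' hv'
  rw [mellin_eq_intervalIntegral ha.le (hofReal hsupp),
    mellin_eq_intervalIntegral ha.le (hofReal (tsupport_deriv_subset.trans hsupp))]
  simp only [hfa, hfc, Complex.ofReal_zero, zero_mul, sub_zero, zero_sub] at hibp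
  rw [add_sub_cancel_right, ← intervalIntegral.integral_div]
  calc _ = ∫ x in a..c, (f x : ℂ) * (x : ℂ) ^ (s - 1) := by simp_rw [mul_comm]
    _ = _ := hibp
    _ = _ := by congr 2; funext x; ring

theorem norm_mellin_le_norm_mellin_iteratedDeriv_div {f : ℝ → ℝ} {n : ℕ} (ha : 0 < a)
    (hf : ContDiff ℝ n f) (hsupp : tsupport f ⊆ Ioo a c) {s : ℂ} (hs : s.im ≠ 0) :
    ‖mellin (fun x => (f x : ℂ)) s‖ ≤
      ‖mellin (fun x => ((iteratedDeriv n f x : ℝ) : ℂ)) (s + n)‖ / |s.im| ^ n := by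
  induction n with
  | zero => simp
  | succ n ih =>
    have hsn : s + n ≠ 0 := fun h => hs (by simpa using congrArg Complex.im h)
    have hfn : ContDiff ℝ 1 (iteratedDeriv n f) := by
      rw [iteratedDeriv_eq_iterate]; exact ContDiff.iterate_deriv' 1 n (by rwa [add_comm 1 n])
    have hstep := mellin_ofReal_eq_neg_mellin_deriv_div ha hfn
      ((tsupport_iteratedDeriv_subset n).trans hsupp) hsn
    have him : |s.im| ≤ ‖s + n‖ := by simpa using Complex.abs_im_le_norm (s + n)
    calc ‖mellin (fun x => (f x : ℂ)) s‖
        ≤ ‖mellin (fun x => ((iteratedDeriv n f x : ℝ) : ℂ)) (s + n)‖ / |s.im| ^ n :=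
          ih (hf.of_le (by norm_cast; omega))
      _ = ‖mellin (fun x => ((iteratedDeriv (n + 1) f x : ℝ) : ℂ)) (s + ↑(n + 1))‖ / ‖s + n‖ /
          |s.im| ^ n := by
          rw [hstep, norm_neg, norm_div, iteratedDeriv_succ, Nat.cast_succ, add_assoc]
      _ ≤ ‖mellin (fun x => ((iteratedDeriv (n + 1) f x : ℝ) : ℂ)) (s + ↑(n + 1))‖ / |s.im| /
          |s.im| ^ n := by
          gcongr
      _ = _ := by rw [div_div, pow_succ']

theorem norm_mellin_le_of_support_subset {g : ℝ → ℂ} {S : Set ℝ} {s : ℂ} {B : ℝ}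
    (hS : volume S < ⊤) (hSpos : S ⊆ Ioi 0) (hg : support g ⊆ S)
    (hB : ∀ x ∈ S, x ^ (s.re - 1) * ‖g x‖ ≤ B) : ‖mellin g s‖ ≤ B * volume.real S := by
  have hvanish : ∀ x ∉ S, (x : ℂ) ^ (s - 1) • g x = 0 := fun x hx => by
    rw [notMem_support.1 fun h => hx (hg h), smul_zero]
  rw [mellin, setIntegral_eq_integral_of_forall_compl_eq_zero fun x hx => hvanish x
    fun h => hx (hSpos h), ← setIntegral_eq_integral_of_forall_compl_eq_zero hvanish]
  refine norm_setIntegral_le_of_norm_le_const hS fun x hx => ?_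
  rw [norm_smul, Complex.norm_cpow_eq_rpow_re_of_pos (hSpos hx)]
  simpa using hB x hx

end Mellin

theorem norm_mellin_cutoff_le {w : ℝ → ℝ} {m : ℕ} {Cm P X : ℝ} (hm : m ≠ 0) (hP : 0 < P)
    (hPX : P ≤ X) (hw : ContDiff ℝ m w) (hzero : ∀ x ∉ Icc P (X + P), w x = 0)
    (hone : ∀ x ∈ Icc (2 * P) X, w x = 1) (hder : ∀ x, |iteratedDeriv m w x| ≤ Cm / P ^ m)
    {s : ℂ} (hre : 0 ≤ s.re) (him : s.im ≠ 0) :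
    ‖mellin (fun x => (w x : ℂ)) s‖ ≤
      Cm / P ^ m * (X + P) ^ (s.re + m - 1) * (2 * P) / |s.im| ^ m := by
  set S := Icc P (2 * P) ∪ Icc X (X + P)
  have htsupp : tsupport w ⊆ Ioo (P / 2) (X + 2 * P) :=
    (closure_minimal (support_subset_iff'.2 hzero) isClosed_Icc).trans
      (Icc_subset_Ioo (by linarith) (by linarith))
  have hS : S ⊆ Icc P (X + P) :=
    union_subset (Icc_subset_Icc le_rfl (by linarith)) (Icc_subset_Icc hPX le_rfl)
  have hvol : volume.real S ≤ 2 * P := by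
    calc volume.real S ≤ volume.real (Icc P (2 * P)) + volume.real (Icc X (X + P)) :=
          measureReal_union_le _ _
      _ = 2 * P := by
          rw [Real.volume_real_Icc_of_le (by linarith), Real.volume_real_Icc_of_le (by linarith)]
          ring
  have hexp : 0 ≤ s.re + m - 1 := by
    have : (1 : ℝ) ≤ m := by exact_mod_cast Nat.one_le_iff_ne_zero.2 hm
    linarith
  have hmellin : ‖mellin (fun x => ((iteratedDeriv m w x : ℝ) : ℂ)) (s + m)‖ ≤
      Cm / P ^ m * (X + P) ^ (s.re + m - 1) * volume.real S := by
    refine norm_mellin_le_of_support_subset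
      (measure_union_lt_top measure_Icc_lt_top measure_Icc_lt_top)
      (fun x hx => hP.trans_le (hS hx).1) ?_ fun x hx => ?_
    · intro x hx
      exact support_iteratedDeriv_subset_of_eq_zero_of_eq_one hm hzero hone (by simpa using hx)
    · rw [Complex.norm_real, Real.norm_eq_abs, mul_comm]
      simp only [Complex.add_re, Complex.natCast_re]
      exact mul_le_mul (hder x) (Real.rpow_le_rpow (hP.le.trans (hS hx).1) (hS hx).2 hexp)
        (Real.rpow_nonneg (hP.le.trans (hS hx).1) _) ((abs_nonneg _).trans (hder x))
  calc ‖mellin (fun x => (w x : ℂ)) s‖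
      ≤ ‖mellin (fun x => ((iteratedDeriv m w x : ℝ) : ℂ)) (s + m)‖ / |s.im| ^ m :=
        norm_mellin_le_norm_mellin_iteratedDeriv_div (by positivity) hw htsupp him
    _ ≤ _ := by
        have hB : 0 ≤ Cm / P ^ m * (X + P) ^ (s.re + m - 1) :=
          mul_nonneg ((abs_nonneg _).trans (hder 0)) (Real.rpow_nonneg (by linarith) _)
        gcongr
        exact hmellin.trans (mul_le_mul_of_nonneg_left hvol hB)

section Tail

variable {r T : ℝ}

theorem integrableOn_abs_rpow_tail (hr : r < -1) (hT : 0 < T) :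
    IntegrableOn (fun t : ℝ => |t| ^ r) {t | T ≤ |t|} := by
  have hIci : IntegrableOn (fun t : ℝ => |t| ^ r) (Ici T) :=
    (Iff.mpr integrableOn_Ici_iff_integrableOn_Ioi (integrableOn_Ioi_rpow_of_lt hr hT)).congr_fun
      (fun t ht => by rw [abs_of_pos (hT.trans_le ht)]) measurableSet_Ici
  have hIic : IntegrableOn (fun t : ℝ => |t| ^ r) (Iic (-T)) := by
    have h := (show IntegrableOn (fun t : ℝ => |t| ^ r) (Ici (-(-T))) by rwa [neg_neg]).comp_neg_Iic
    simpa only [abs_neg] using h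
  have hsplit : {t : ℝ | T ≤ |t|} = Iic (-T) ∪ Ici T := by
    ext t
    simp only [mem_ofPred_eq, mem_union, mem_Iic, mem_Ici, le_abs, le_neg]
    tauto
  rw [hsplit]
  exact hIic.union hIci

theorem integral_abs_rpow_tail (hr : r < -1) (hT : 0 < T) :
    ∫ t in {t : ℝ | T ≤ |t|}, |t| ^ r = 2 * (-T ^ (r + 1) / (r + 1)) := by
  have hind : {t : ℝ | T ≤ |t|}.indicator (fun t => |t| ^ r) =
      fun t => (Ici T).indicator (fun y => y ^ r) |t| := by
    ext t
    by_cases ht : T ≤ |t| <;> simp [indicator, ht]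
  rw [← integral_indicator (measurableSet_le measurable_const measurable_abs), hind,
    integral_comp_abs, setIntegral_indicator measurableSet_Ici,
    inter_eq_right.2 (Ici_subset_Ioi.2 hT), integral_Ici_eq_integral_Ioi,
    integral_Ioi_rpow_of_lt hr hT]

theorem integral_tail_le_of_le_mul_abs_rpow {g : ℝ → ℝ} {A : ℝ} (hr : r < -1) (hT : 0 < T)
    (hg0 : ∀ t, 0 ≤ g t) (hg : ∀ t ∈ {t : ℝ | T ≤ |t|}, g t ≤ A * |t| ^ r) :
    ∫ t in {t : ℝ | T ≤ |t|}, g t ≤ A * (2 * (-T ^ (r + 1) / (r + 1))) := by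
  rw [← integral_abs_rpow_tail hr hT, ← integral_const_mul]
  exact integral_mono_of_nonneg (ae_of_all _ hg0) ((integrableOn_abs_rpow_tail hr hT).const_mul A)
    (ae_restrict_of_forall_mem (measurableSet_le measurable_const measurable_abs) hg)

end Tail

theorem add_rpow_le_mul_rpow {X P e k : ℝ} (hP : 0 ≤ P) (hPX : P ≤ X / 2) (he : 0 ≤ e)
    (hek : e ≤ k) : (X + P) ^ e ≤ (3 / 2) ^ k * X ^ e := by
  calc (X + P) ^ e ≤ (3 / 2 * X) ^ e := Real.rpow_le_rpow (by linarith) (by linarith) he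
    _ = (3 / 2) ^ e * X ^ e := Real.mul_rpow (by norm_num) (by linarith)
    _ ≤ (3 / 2) ^ k * X ^ e := by
        have : 0 ≤ X ^ e := Real.rpow_nonneg (by linarith) e
        gcongr
        norm_num

theorem div_pow_mul_add_rpow_mul_le {Cm P X b : ℝ} {m : ℕ} (hCm : 0 ≤ Cm) (hP : 0 < P)
    (hPX : P ≤ X / 2) (hb : 0 ≤ b + m - 1) (hb2 : b ≤ 2) :
    Cm / P ^ m * (X + P) ^ (b + m - 1) * (2 * P) ≤
      2 * (3 / 2) ^ (m + 1) * Cm * P * X ^ (b - 1) * (X / P) ^ m := by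
  have hX : 0 < X := by linarith
  calc Cm / P ^ m * (X + P) ^ (b + m - 1) * (2 * P)
      ≤ Cm / P ^ m * ((3 / 2) ^ ((m : ℝ) + 1) * X ^ (b + m - 1)) * (2 * P) := by
        gcongr
        exact add_rpow_le_mul_rpow hP.le hPX hb (by linarith)
    _ = 2 * (3 / 2) ^ (m + 1) * Cm * P * X ^ (b - 1) * (X / P) ^ m := by
        rw [div_pow X P, show b + m - 1 = (b - 1) + m by ring, Real.rpow_add hX, Real.rpow_natCast,
          show ((m : ℝ) + 1) = ((m + 1 : ℕ) : ℝ) by push_cast; ring, Real.rpow_natCast]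
        field_simp

theorem mellin_tail_integral_bound (m : ℕ) (hm : 2 ≤ m) (Cm : ℝ) (hCm : 0 ≤ Cm) :
    ∃ C' : ℝ, ∀ (P X : ℝ), 0 < P → P ≤ X / 2 → ∀ w : ℝ → ℝ,
      ContDiff ℝ m w →
      (∀ x : ℝ, x ∉ Set.Icc P (X + P) → w x = 0) →
      (∀ x ∈ Set.Icc (2 * P) X, w x = 1) →
      (∀ x : ℝ, 0 ≤ w x ∧ w x ≤ 1) →
      (∀ x : ℝ, |iteratedDeriv m w x| ≤ Cm / P ^ m) →
      ∀ b : ℝ, 0 < b → b ≤ 2 → ∀ M : ℝ, 0 ≤ M → ∀ F : ℝ → ℂ, Measurable F →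
        (∀ t : ℝ, ‖F t‖ ≤ M) → ∀ T : ℝ, 1 ≤ T →
        (∫ t in {t : ℝ | T ≤ |t|},
            ‖∫ x in Set.Ioi (0 : ℝ), (w x : ℂ) * (x : ℂ) ^ ((b : ℂ) + t * Complex.I - 1)‖ *
              ‖F t‖) ≤
          C' * M * P * X ^ (b - 1) * (X / P) ^ m * T ^ (1 - (m : ℝ)) := by
  refine ⟨4 * (3 / 2) ^ (m + 1) * Cm / (m - 1), ?_⟩
  intro P X hP hPX w hw hzero hone _ hder b hb hb2 M hM F _ hFM T hT
  have hm1 : (1 : ℝ) < m := by exact_mod_cast hm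
  set K := Cm / P ^ m * (X + P) ^ (b + m - 1) * (2 * P)
  have hpoint : ∀ t ∈ {t : ℝ | T ≤ |t|},
      ‖∫ x in Ioi (0 : ℝ), (w x : ℂ) * (x : ℂ) ^ ((b : ℂ) + t * Complex.I - 1)‖ * ‖F t‖ ≤
        M * K * |t| ^ (-(m : ℝ)) := by
    intro t ht
    have ht0 : 0 < |t| := one_pos.trans_le (hT.trans ht)
    obtain ⟨hre, him⟩ : ((b : ℂ) + t * Complex.I).re = b ∧ ((b : ℂ) + t * Complex.I).im = t := by
      simp
    have hmellin := norm_mellin_cutoff_le (by omega) hP (by linarith) hw hzero hone hder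
      (by rw [hre]; exact hb.le) (by rw [him]; exact abs_pos.1 ht0)
    rw [hre, him] at hmellin
    rw [show ∫ x in Ioi (0 : ℝ), (w x : ℂ) * (x : ℂ) ^ ((b : ℂ) + t * Complex.I - 1) =
        mellin (fun x => (w x : ℂ)) (b + t * Complex.I) by
          simp only [mellin, smul_eq_mul, mul_comm],
      Real.rpow_neg ht0.le, Real.rpow_natCast]
    calc _ ≤ K / |t| ^ m * M :=
          mul_le_mul hmellin (hFM t) (norm_nonneg _) ((norm_nonneg _).trans hmellin)
      _ = M * K * (|t| ^ m)⁻¹ := by ring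
  have hK : K ≤ 2 * (3 / 2) ^ (m + 1) * Cm * P * X ^ (b - 1) * (X / P) ^ m :=
    div_pow_mul_add_rpow_mul_le hCm hP hPX (by linarith) hb2
  have hm1' : 0 < (m : ℝ) - 1 := by linarith
  calc _ ≤ M * K * (2 * (-T ^ (-(m : ℝ) + 1) / (-(m : ℝ) + 1))) :=
        integral_tail_le_of_le_mul_abs_rpow (by linarith) (by linarith)
          (fun t => by positivity) hpoint
    _ = M * K * (2 * (T ^ (1 - (m : ℝ)) / (m - 1))) := by
        rw [show -(m : ℝ) + 1 = 1 - m by ring, neg_div, ← div_neg, neg_sub]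
    _ ≤ M * (2 * (3 / 2) ^ (m + 1) * Cm * P * X ^ (b - 1) * (X / P) ^ m) *
          (2 * (T ^ (1 - (m : ℝ)) / (m - 1))) := by gcongr
    _ = _ := by ring
end
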